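/- arXiv:2404.07958 — 2 statements merged into one kernel-verified Lean document; each statement's English description precedes it below -/
import Mathlib

section
/- The number of increasing parking functions of size n equals the n-th Catalan number. -/
open Finset

noncomputable section

/-- The parking process over the first `k` cars (cars are `0,...,k-1`, i.e. cars `1,...,k`
in 1-indexed terms): returns `some occ` where `occ` maps each spot to the car parked there
(`none` meaning empty), or `none` if some car failed to park.  Car `c` drives to its
preferred spot `f c` and parks at the first free spot with index `≥ f c`, failing if
no such spot exists. -/
def parkAux {n : ℕ} (f : Fin n → Fin n) : ℕ → Option (Fin n → Option (Fin n))
  | 0 => some fun _ => none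
  | k + 1 =>
    (parkAux f k).bind fun occ =>
      if h : k < n then
        if hS : (Finset.univ.filter fun s => f ⟨k, h⟩ ≤ s ∧ occ s = none).Nonempty then
          some (Function.update occ
            ((Finset.univ.filter fun s => f ⟨k, h⟩ ≤ s ∧ occ s = none).min' hS)
            (some ⟨k, h⟩))
        else none
      else some occ

/-- All `n` cars park successfully. -/
def AllPark {n : ℕ} (f : Fin n → Fin n) : Prop := (parkAux f n).isSome

/-- `f` is a parking function: for every `i ∈ [n]`, at least `i` cars prefer
the first `i` spots.  (Here `i : Fin n` denotes the `(i+1)`-st spot, 0-indexed.) -/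
def IsParkingFunction {n : ℕ} (f : Fin n → Fin n) : Prop :=
  ∀ i : Fin n, i.val + 1 ≤ (Finset.univ.filter fun j => f j ≤ i).card

/-- `ρ` is the parking permutation of `f`: after all cars have parked,
spot `i` is occupied by car `ρ i`. -/
def IsParkingPerm {n : ℕ} (f : Fin n → Fin n) (ρ : Equiv.Perm (Fin n)) : Prop :=
  parkAux f n = some fun i => some (ρ i)

/-- `π` contains `σ` as a pattern. -/
def ContainsPattern {n m : ℕ} (π : Equiv.Perm (Fin n)) (σ : Equiv.Perm (Fin m)) : Prop :=
  ∃ g : Fin m → Fin n, StrictMono g ∧ ∀ a b : Fin m, σ a < σ b ↔ π (g a) < π (g b)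

/-- `ρ` avoids every pattern in the list `pats`. -/
def AvoidsAll {n : ℕ} (ρ : Equiv.Perm (Fin n)) (pats : List (Equiv.Perm (Fin 3))) : Prop :=
  ∀ σ ∈ pats, ¬ ContainsPattern ρ σ

/-- The number of parking functions of size `n` whose parking permutation avoids
all patterns in `pats`. -/
def pk (n : ℕ) (pats : List (Equiv.Perm (Fin 3))) : ℕ :=
  Nat.card {f : Fin n → Fin n // IsParkingFunction f ∧
    ∃ ρ : Equiv.Perm (Fin n), IsParkingPerm f ρ ∧ AvoidsAll ρ pats}

def p123 : Equiv.Perm (Fin 3) := Equiv.ofBijective ![0, 1, 2] (by decide)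
def p132 : Equiv.Perm (Fin 3) := Equiv.ofBijective ![0, 2, 1] (by decide)
def p213 : Equiv.Perm (Fin 3) := Equiv.ofBijective ![1, 0, 2] (by decide)
def p231 : Equiv.Perm (Fin 3) := Equiv.ofBijective ![1, 2, 0] (by decide)
def p312 : Equiv.Perm (Fin 3) := Equiv.ofBijective ![2, 0, 1] (by decide)
def p321 : Equiv.Perm (Fin 3) := Equiv.ofBijective ![2, 1, 0] (by decide)

/-! Increasing parking functions are the sequences `0 = a₀ ≤ a₁ ≤ ⋯ ≤ aₙ₋₁` with `aᵢ ≤ i`,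
i.e. lattice paths staying weakly below the diagonal. Such a sequence of length `n + 1` splits
at its first return `k` to the diagonal into an arbitrary sequence of length `k` (the part
strictly below the diagonal, shifted one step left) and an arbitrary sequence of length `n - k`
(the rest, shifted down to the diagonal), which gives the Catalan recursion. -/

theorem Nat.card_eq_catalan_of_equiv {X : ℕ → Type*} [∀ n, Finite (X n)]
    (h₀ : Nat.card (X 0) = 1) (e : ∀ n, X (n + 1) ≃ Σ k : Fin (n + 1), X k × X (n - k))
    (n : ℕ) : Nat.card (X n) = catalan n := by
  induction n using Nat.strong_induction_on with
  | _ n ih =>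
    cases n with
    | zero => rw [h₀, catalan_zero]
    | succ n =>
      rw [Nat.card_congr (e n), Nat.card_sigma, catalan_succ]
      refine Finset.sum_congr rfl fun k _ => ?_
      rw [Nat.card_prod, ih k (by omega), ih (n - k) (by omega)]

theorem isParkingFunction_iff_forall_le_of_monotone {n : ℕ} {f : Fin n → Fin n}
    (hf : Monotone f) : IsParkingFunction f ↔ ∀ i, f i ≤ i := by
  constructor
  · intro hpark i
    by_contra! hi
    have hsub : (univ.filter fun j => f j ≤ i) ⊆ Iio i := by
      intro j hj
      simp only [mem_filter, mem_univ, true_and] at hj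
      exact mem_Iio.2 (lt_of_not_ge fun hij => (hi.trans_le (hf hij)).not_ge hj)
    have := (card_le_card hsub).trans_eq (Fin.card_Iio i)
    have := hpark i
    omega
  · intro hle i
    have hsub : Iic i ⊆ univ.filter fun j => f j ≤ i := fun j hj => by
      simpa using (hle j).trans (mem_Iic.1 hj)
    simpa using card_le_card hsub

/-- A sequence `a₀, …, aₘ₋₁` is encoded by a function `ℕ → ℕ` that is the identity from `m` on,
so that splitting and gluing sequences needs no `Fin` arithmetic. -/
def subdiagSeqs (m : ℕ) : Set (ℕ → ℕ) :=
  {f | Monotone f ∧ (∀ i, f i ≤ i) ∧ ∀ i, m ≤ i → f i = i}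

namespace subdiagSeqs

instance (m : ℕ) : Finite (subdiagSeqs m) := by
  refine Finite.of_injective (fun f : subdiagSeqs m => fun i : Fin m =>
    (⟨f.1 i, (f.2.2.1 i).trans_lt i.2⟩ : Fin m)) fun f g hfg => Subtype.ext (funext fun i => ?_)
  by_cases hi : i < m
  · simpa using congrFun hfg ⟨i, hi⟩
  · rw [f.2.2.2 i (by omega), g.2.2.2 i (by omega)]

theorem card_zero : Nat.card (subdiagSeqs 0) = 1 := by
  refine Nat.card_eq_one_iff_exists.2 ⟨⟨id, monotone_id, fun _ => le_rfl, fun _ _ => rfl⟩, ?_⟩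
  exact fun f => Subtype.ext (funext fun i => f.2.2.2 i (Nat.zero_le i))

end subdiagSeqs

def monotoneParkingEquiv (n : ℕ) :
    {f : Fin n → Fin n // IsParkingFunction f ∧ Monotone f} ≃ subdiagSeqs n where
  toFun f := ⟨fun i => if h : i < n then f.1 ⟨i, h⟩ else i, by
    obtain ⟨f, hpark, hmono⟩ := f
    have hle := (isParkingFunction_iff_forall_le_of_monotone hmono).1 hpark
    refine ⟨fun i j hij => ?_, fun i => ?_, fun i hi => by simp [not_lt.2 hi]⟩
    · by_cases hj : j < n
      · simpa [hij.trans_lt hj, hj] using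
          hmono (show (⟨i, hij.trans_lt hj⟩ : Fin n) ≤ ⟨j, hj⟩ from hij)
      · simp only [hj, dite_false]
        split_ifs with hi
        · exact ((f ⟨i, hi⟩).isLt.trans_le (not_lt.1 hj)).le
        · exact hij
    · dsimp only
      split_ifs with hi
      · exact hle ⟨i, hi⟩
      · exact le_rfl⟩
  invFun g := ⟨fun i => ⟨g.1 i, (g.2.2.1 i).trans_lt i.2⟩, by
    refine ⟨(isParkingFunction_iff_forall_le_of_monotone fun i j hij => ?_).2
      fun i => g.2.2.1 i, fun i j hij => ?_⟩ <;> exact g.2.1 hij⟩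
  left_inv f := by ext i; simp
  right_inv g := Subtype.ext <| funext fun i => by
    by_cases hi : i < n
    · simp [hi]
    · simp [hi, g.2.2.2 i (by omega)]

def firstReturn (f : ℕ → ℕ) : ℕ := sInf {k | f (k + 1) = k + 1}

theorem firstReturn_eq_iff {f : ℕ → ℕ} (hf : ∃ k, f (k + 1) = k + 1) {k : ℕ} :
    firstReturn f = k ↔ f (k + 1) = k + 1 ∧ ∀ j < k, f (j + 1) ≠ j + 1 := by
  constructor
  · rintro rfl
    exact ⟨Nat.sInf_mem hf, fun j hj => Nat.notMem_of_lt_sInf (s := {k | f (k + 1) = k + 1}) hj⟩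
  · rintro ⟨hk, hbelow⟩
    exact le_antisymm (Nat.sInf_le hk) (not_lt.1 fun hlt => hbelow _ hlt (Nat.sInf_mem hf))

theorem firstReturn_le {n : ℕ} {f : ℕ → ℕ} (hf : f ∈ subdiagSeqs (n + 1)) :
    firstReturn f ≤ n :=
  Nat.sInf_le (hf.2.2 (n + 1) le_rfl)

def lowerPart (k : ℕ) (f : ℕ → ℕ) (i : ℕ) : ℕ := if i < k then f (i + 1) else i

def upperPart (k : ℕ) (f : ℕ → ℕ) (i : ℕ) : ℕ := f (i + k + 1) - (k + 1)

def glue (k : ℕ) (g h : ℕ → ℕ) : ℕ → ℕ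
  | 0 => 0
  | i + 1 => if i < k then g i else h (i - k) + (k + 1)

section FirstReturnDecomposition

variable {n k : ℕ} {f g h : ℕ → ℕ}

theorem lowerPart_mem (hf : f ∈ subdiagSeqs (n + 1)) (hk : firstReturn f = k) :
    lowerPart k f ∈ subdiagSeqs k := by
  have hbelow := ((firstReturn_eq_iff ⟨n, hf.2.2 _ le_rfl⟩).1 hk).2
  have hlt : ∀ i < k, f (i + 1) ≤ i := fun i hi => by
    have := hf.2.1 (i + 1); have := hbelow i hi; omega
  refine ⟨fun i j hij => ?_, fun i => ?_, fun i hi => if_neg (by omega)⟩ <;>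
    simp only [lowerPart]
  · split_ifs with hi hj hj
    · exact hf.1 (by omega)
    · exact (hlt i hi).trans hij
    · omega
    · exact hij
  · split_ifs with hi
    exacts [hlt i hi, le_rfl]

theorem upperPart_mem (hf : f ∈ subdiagSeqs (n + 1)) : upperPart k f ∈ subdiagSeqs (n - k) := by
  refine ⟨fun i j hij => Nat.sub_le_sub_right (hf.1 (by omega)) _, fun i => ?_, fun i hi => ?_⟩ <;>
    simp only [upperPart]
  · have := hf.2.1 (i + k + 1); omega
  · rw [hf.2.2 _ (by omega)]; omega

theorem glue_mem (hk : k ≤ n) (hg : g ∈ subdiagSeqs k) (hh : h ∈ subdiagSeqs (n - k)) :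
    glue k g h ∈ subdiagSeqs (n + 1) := by
  refine ⟨monotone_nat_of_le_succ fun i => ?_, fun i => ?_, fun i hi => ?_⟩
  · rcases i with _ | i
    · exact Nat.zero_le _
    simp only [glue]
    split_ifs with hi hi' hi'
    · exact hg.1 (by omega)
    · have := hg.2.1 i; omega
    · omega
    · have := hh.1 (show i - k ≤ i + 1 - k by omega); omega
  · rcases i with _ | i
    · exact le_rfl
    simp only [glue]
    split_ifs with hi
    · exact (hg.2.1 i).trans (Nat.le_succ i)
    · have := hh.2.1 (i - k); omega
  · obtain ⟨i, rfl⟩ : ∃ j, i = j + 1 := ⟨i - 1, by omega⟩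
    simp only [glue, if_neg (show ¬i < k by omega), hh.2.2 (i - k) (by omega)]
    omega

theorem firstReturn_glue (hg : g ∈ subdiagSeqs k) (hh : h ∈ subdiagSeqs (n - k)) :
    firstReturn (glue k g h) = k := by
  have hret : glue k g h (k + 1) = k + 1 := by
    simp only [glue, lt_irrefl, if_false, Nat.sub_self]
    have := hh.2.1 0; omega
  refine (firstReturn_eq_iff ⟨k, hret⟩).2 ⟨hret, fun j hj => ?_⟩
  simp only [glue, if_pos hj]
  have := hg.2.1 j; omega

theorem glue_lowerPart_upperPart (hf : f ∈ subdiagSeqs (n + 1)) (hk : firstReturn f = k) :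
    glue k (lowerPart k f) (upperPart k f) = f := by
  have hret := ((firstReturn_eq_iff ⟨n, hf.2.2 _ le_rfl⟩).1 hk).1
  funext i
  rcases i with _ | i
  · have := hf.2.1 0; simp only [glue]; omega
  simp only [glue, lowerPart, upperPart]
  split_ifs with hi
  · rfl
  · have := hf.1 (show k + 1 ≤ i + 1 by omega)
    rw [show i - k + k + 1 = i + 1 by omega]
    omega

theorem lowerPart_glue (hg : g ∈ subdiagSeqs k) : lowerPart k (glue k g h) = g := by
  funext i
  simp only [lowerPart, glue]
  split_ifs with hi
  · rfl
  · exact (hg.2.2 i (by omega)).symm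

theorem upperPart_glue : upperPart k (glue k g h) = h := by
  funext i
  simp only [upperPart, glue, if_neg (show ¬i + k < k by omega), Nat.add_sub_cancel]

end FirstReturnDecomposition

def firstReturnFiberEquiv (n : ℕ) (k : Fin (n + 1)) :
    {f : subdiagSeqs (n + 1) // firstReturn f.1 = k} ≃ subdiagSeqs k × subdiagSeqs (n - k) where
  toFun f := (⟨lowerPart k f.1.1, lowerPart_mem f.1.2 f.2⟩, ⟨upperPart k f.1.1, upperPart_mem f.1.2⟩)
  invFun p := ⟨⟨glue k p.1.1 p.2.1, glue_mem (Nat.lt_succ_iff.1 k.2) p.1.2 p.2.2⟩,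
    firstReturn_glue p.1.2 p.2.2⟩
  left_inv f := Subtype.ext <| Subtype.ext <| glue_lowerPart_upperPart f.1.2 f.2
  right_inv p := Prod.ext (Subtype.ext <| lowerPart_glue p.1.2) (Subtype.ext upperPart_glue)

def subdiagSeqsSuccEquiv (n : ℕ) :
    subdiagSeqs (n + 1) ≃ Σ k : Fin (n + 1), subdiagSeqs k × subdiagSeqs (n - k) :=
  (Equiv.sigmaFiberEquiv fun f : subdiagSeqs (n + 1) =>
      (⟨firstReturn f.1, Nat.lt_succ_of_le (firstReturn_le f.2)⟩ : Fin (n + 1))).symm.trans <|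
    Equiv.sigmaCongrRight fun k =>
      (Equiv.subtypeEquivRight fun f => by simp [Fin.ext_iff]).trans (firstReturnFiberEquiv n k)

/-- The number of increasing parking functions of size `n` equals the `n`-th Catalan number. -/
theorem stmt1 (n : ℕ) :
    Nat.card {f : Fin n → Fin n // IsParkingFunction f ∧ Monotone f} = catalan n := by
  rw [Nat.card_congr (monotoneParkingEquiv n)]
  exact Nat.card_eq_catalan_of_equiv (X := fun m => subdiagSeqs m) subdiagSeqs.card_zero
    subdiagSeqsSuccEquiv n
end
end

section
/- For any permutation ρ of {1,...,n}, the number of parking functions f of size n whose parking permutation equals ρ is ∏_{i=1}^n ℓ(i,ρ), where ℓ(i,ρ) = max{ℓ : ρ(j) ≤ ρ(i) for all i−ℓ+1 ≤ j ≤ i}. -/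
open Finset

noncomputable section

/-- `ell ρ i` is the largest `ℓ` such that `ρ j ≤ ρ i` for all `i - ℓ + 1 ≤ j ≤ i`
(in 1-indexed terms). -/
def ell {n : ℕ} (ρ : Equiv.Perm (Fin n)) (i : Fin n) : ℕ :=
  ((Finset.Icc 1 (i.val + 1)).filter fun l =>
    ∀ j : Fin n, i.val + 1 - l ≤ j.val → j ≤ i → ρ j ≤ ρ i).sup id

/-! Car `ρ i` ends up in spot `i` exactly when its preference `j` satisfies `j ≤ i` and the spots
`j, …, i - 1` are already taken when it arrives, i.e. are held by cars `ρ m < ρ i`. So `f` has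
parking permutation `ρ` iff each `f (ρ i)` lies in the block of spots ending at `i` on which `ρ`
stays at most `ρ i`, a block of `ℓ(i, ρ)` spots; such an `f` is automatically a parking function,
and the conditions on the different cars are independent. -/

theorem Finset.card_eq_sup_of_forall_le_mem (s : Finset ℕ) (h0 : 0 ∉ s)
    (hs : ∀ a ∈ s, ∀ b, 0 < b → b ≤ a → b ∈ s) : s.card = s.sup id := by
  suffices s = Icc 1 (s.sup id) by rw [this, Nat.card_Icc, this.symm]; omega
  ext l
  refine ⟨fun hl => mem_Icc.mpr ⟨Nat.pos_of_ne_zero (ne_of_mem_of_not_mem hl h0),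
    le_sup (f := id) hl⟩, fun hl => ?_⟩
  obtain ⟨hl1, hlsup⟩ := mem_Icc.mp hl
  obtain ⟨a, ha, hsup⟩ := s.exists_mem_eq_sup
    (nonempty_iff_ne_empty.mpr fun h => by simp [h] at hlsup; omega) id
  exact hs a ha l hl1 (hlsup.trans_eq hsup)

/-- The preferences that make car `ρ i` end up in spot `i`. -/
def admissiblePrefs {n : ℕ} (ρ : Equiv.Perm (Fin n)) (i : Fin n) : Finset (Fin n) :=
  univ.filter fun j => j ≤ i ∧ ∀ m, j ≤ m → m < i → ρ m < ρ i

theorem card_admissiblePrefs {n : ℕ} (ρ : Equiv.Perm (Fin n)) (i : Fin n) :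
    (admissiblePrefs ρ i).card = ell ρ i := by
  rw [ell, ← Finset.card_eq_sup_of_forall_le_mem]
  · refine card_bij (fun j _ => i.val + 1 - j.val) ?_ ?_ ?_
    · intro j hj
      simp only [admissiblePrefs, mem_filter, mem_univ, true_and] at hj
      obtain ⟨hji, hρ⟩ := hj
      have : j.val ≤ i.val := hji
      refine mem_filter.mpr ⟨mem_Icc.mpr ⟨by omega, by omega⟩, fun m hm hmi => ?_⟩
      rcases hmi.lt_or_eq with hmi | rfl
      · exact (hρ m (by rw [Fin.le_def]; omega) hmi).le
      · exact le_rfl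
    · intro a ha b hb hab
      simp only [admissiblePrefs, mem_filter, mem_univ, true_and, Fin.le_def] at ha hb
      exact Fin.ext (by omega)
    · intro l hl
      obtain ⟨hl, hρ⟩ := mem_filter.mp hl
      obtain ⟨hl1, hli⟩ := mem_Icc.mp hl
      refine ⟨⟨i.val + 1 - l, by omega⟩, ?_, by simp; omega⟩
      simp only [admissiblePrefs, mem_filter, mem_univ, true_and, Fin.le_def]
      refine ⟨by simp; omega, fun m hm hmi => ?_⟩
      exact (hρ m hm hmi.le).lt_of_ne (ρ.injective.ne hmi.ne)
  · simp
  · intro a ha b hb hba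
    obtain ⟨ha, hρ⟩ := mem_filter.mp ha
    exact mem_filter.mpr ⟨mem_Icc.mpr ⟨hb, (hba.trans (mem_Icc.mp ha).2)⟩,
      fun j hj => hρ j (by omega)⟩

section Parking

variable {n : ℕ} (f : Fin n → Fin n)

def ParkedAt (occ : Fin n → Option (Fin n)) (c s : Fin n) : Prop :=
  occ s = some c ∧ f c ≤ s ∧ ∀ m, f c ≤ m → m < s → ∃ c', occ m = some c' ∧ c' < c

variable {f} in
theorem ParkedAt.update {occ : Fin n → Option (Fin n)} {c s t : Fin n} (h : ParkedAt f occ c s)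
    (ht : occ t = none) (x : Option (Fin n)) : ParkedAt f (Function.update occ t x) c s := by
  have hne : ∀ {m c'}, occ m = some c' → m ≠ t := fun hm hmt => by simp [hmt, ht] at hm
  obtain ⟨hs, hfs, hpassed⟩ := h
  refine ⟨by rw [Function.update_of_ne (hne hs), hs], hfs, fun m hfm hms => ?_⟩
  obtain ⟨c', hc', hlt⟩ := hpassed m hfm hms
  exact ⟨c', by rw [Function.update_of_ne (hne hc'), hc'], hlt⟩

theorem parkAux_succ_eq_some_iff {k : ℕ} (hk : k < n) {occ₀ : Fin n → Option (Fin n)}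
    (h₀ : parkAux f k = some occ₀) (occ : Fin n → Option (Fin n)) :
    parkAux f (k + 1) = some occ ↔ ∃ s, IsLeast {t | f ⟨k, hk⟩ ≤ t ∧ occ₀ t = none} s ∧
      occ = Function.update occ₀ s (some ⟨k, hk⟩) := by
  rw [parkAux, h₀, Option.bind_some, dif_pos hk]
  split_ifs with hS
  · have hleast := (univ.filter fun t => f ⟨k, hk⟩ ≤ t ∧ occ₀ t = none).isLeast_min' hS
    rw [coe_filter_univ] at hleast
    rw [Option.some.injEq]
    constructor
    · rintro rfl
      exact ⟨_, hleast, rfl⟩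
    · rintro ⟨s, hs, rfl⟩
      rw [hleast.unique hs]
  · simp only [false_iff, not_exists, not_and]
    exact fun s hs _ => hS ⟨s, by simpa using hs.1⟩

theorem parkAux_invariant :
    ∀ k ≤ n, ∀ occ, parkAux f k = some occ →
      (∀ s c, occ s = some c → c.val < k) ∧ ∀ c : Fin n, c.val < k → ∃ s, ParkedAt f occ c s := by
  intro k
  induction k with
  | zero =>
    rintro - occ h
    simp only [parkAux, Option.some.injEq] at h
    subst h
    simp
  | succ k ih =>
    intro hk occ h
    have hk : k < n := hk
    obtain ⟨occ₀, h₀, -⟩ := Option.bind_eq_some_iff.mp h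
    obtain ⟨hbound, hparked⟩ := ih hk.le occ₀ h₀
    obtain ⟨s, ⟨⟨hfs, hs_free⟩, hs_least⟩, rfl⟩ := (parkAux_succ_eq_some_iff f hk h₀ occ).mp h
    constructor
    · intro t c ht
      rcases eq_or_ne t s with rfl | hts
      · simp only [Function.update_self, Option.some.injEq] at ht
        simp [← ht]
      · rw [Function.update_of_ne hts] at ht
        exact (hbound t c ht).trans k.lt_succ_self
    · intro c hc
      rcases Nat.lt_succ_iff_lt_or_eq.mp hc with hc | hc
      · obtain ⟨t, ht⟩ := hparked c hc
        exact ⟨t, ht.update hs_free _⟩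
      · obtain rfl : c = ⟨k, hk⟩ := Fin.ext hc
        refine ⟨s, by simp, hfs, fun m hfm hms => ?_⟩
        obtain ⟨c', hc'⟩ := Option.ne_none_iff_exists'.mp
          fun hfree => (hs_least ⟨hfm, hfree⟩).not_gt hms
        exact ⟨c', by rw [Function.update_of_ne hms.ne, hc'], hbound m c' hc'⟩

theorem parkAux_eq_of_forall_mem_admissiblePrefs (ρ : Equiv.Perm (Fin n))
    (hρ : ∀ i, f (ρ i) ∈ admissiblePrefs ρ i) :
    ∀ k ≤ n, parkAux f k = some fun i => if (ρ i).val < k then some (ρ i) else none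
  | 0, _ => by simp [parkAux]
  | k + 1, hk => by
    have hk : k < n := hk
    rw [parkAux_succ_eq_some_iff f hk (parkAux_eq_of_forall_mem_admissiblePrefs ρ hρ k hk.le)]
    set s := ρ.symm ⟨k, hk⟩
    have hρs : ρ s = ⟨k, hk⟩ := ρ.apply_symm_apply _
    obtain ⟨hfs, hpassed⟩ : f (ρ s) ≤ s ∧ ∀ m, f (ρ s) ≤ m → m < s → ρ m < ρ s := by
      simpa [admissiblePrefs] using hρ s
    rw [hρs] at hfs hpassed
    refine ⟨s, ⟨⟨hfs, by simp [hρs]⟩, fun t ⟨hft, ht⟩ => ?_⟩, ?_⟩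
    · by_contra! hts
      have hρt : (ρ t).val < k := hpassed t hft hts
      simp [hρt] at ht
    · funext i
      rcases eq_or_ne i s with rfl | his
      · simp [hρs]
      · have : (ρ i).val ≠ k := fun h => his (ρ.injective (hρs ▸ Fin.ext h))
        simp only [Function.update_of_ne his]
        split_ifs <;> first | rfl | omega

theorem isParkingPerm_iff (ρ : Equiv.Perm (Fin n)) :
    IsParkingPerm f ρ ↔ ∀ i, f (ρ i) ∈ admissiblePrefs ρ i := by
  constructor
  · intro h i
    obtain ⟨-, hparked⟩ := parkAux_invariant f n le_rfl _ h
    obtain ⟨s, hs, hfs, hpassed⟩ := hparked (ρ i) (ρ i).isLt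
    obtain rfl : s = i := ρ.injective (Option.some.inj hs)
    simp only [admissiblePrefs, mem_filter, mem_univ, true_and]
    refine ⟨hfs, fun m hfm hms => ?_⟩
    obtain ⟨c', hc', hlt⟩ := hpassed m hfm hms
    rwa [Option.some.inj hc']
  · intro h
    rw [IsParkingPerm, parkAux_eq_of_forall_mem_admissiblePrefs f ρ h n le_rfl]
    simp

variable {f} in
theorem IsParkingPerm.isParkingFunction {ρ : Equiv.Perm (Fin n)} (h : IsParkingPerm f ρ) :
    IsParkingFunction f := by
  have hρ := (isParkingPerm_iff f ρ).mp h
  intro i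
  have hsub : (Iic i).image ρ ⊆ univ.filter fun j => f j ≤ i := by
    simp only [subset_iff, mem_image, mem_Iic, mem_filter, mem_univ, true_and]
    rintro _ ⟨m, hmi, rfl⟩
    exact ((mem_filter.mp (hρ m)).2.1).trans hmi
  calc i.val + 1 = ((Iic i).image ρ).card := by
        rw [card_image_of_injective _ ρ.injective, Fin.card_Iic]
    _ ≤ _ := card_le_card hsub

end Parking

/-- For any permutation `ρ` of `[n]`, the number of parking functions `f` of size `n`
whose parking permutation equals `ρ` is `∏ i, ell ρ i`. -/
theorem stmt2 (n : ℕ) (ρ : Equiv.Perm (Fin n)) :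
    Nat.card {f : Fin n → Fin n // IsParkingFunction f ∧ IsParkingPerm f ρ} =
      ∏ i : Fin n, ell ρ i := by
  have hcond : ∀ f : Fin n → Fin n, (IsParkingFunction f ∧ IsParkingPerm f ρ) ↔
      f ∈ Fintype.piFinset fun c => admissiblePrefs ρ (ρ.symm c) := by
    intro f
    rw [and_iff_right_of_imp IsParkingPerm.isParkingFunction, isParkingPerm_iff,
      Fintype.mem_piFinset,
      ← ρ.forall_congr_right (q := fun c => f c ∈ admissiblePrefs ρ (ρ.symm c))]
    simp only [Equiv.symm_apply_apply]
  rw [Nat.card_congr (Equiv.subtypeEquivRight hcond), Nat.card_eq_fintype_card,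
    Fintype.card_coe, Fintype.card_piFinset, ← Equiv.prod_comp ρ]
  simp only [Equiv.symm_apply_apply, card_admissiblePrefs]
end
end
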